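/- Let κ > 0, u₀ > 0, a > 0, and let u solve u''/(1-u'²)^{3/2} = κu on [0,a] with u(0) = u₀, u'(0) = 0, u'(a) = tanh β with β > 0. Then u₀ - 1/(κu₀) + √(a² + 1/(κ²u₀²)) < u(a) < u₀ + a·(cosh β - 1)/sinh β. -/

import Mathlib

/-!
Write `φ = u' / √(1 - u'²)` (the hyperbolic sine of the inclination angle). The band equation
becomes `φ' = κ u` with `u' = φ / √(1 + φ²)`, and the hyperbola `y = √(r² + μ²)` satisfies the
same slope relation with `φ = r / μ`. The energy `√(1 + φ²) - κ u² / 2` is constant, so `u ≥ u₀ > 0`;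
hence `φ` is increasing and `u` is increasing. Then `φ' > κ u₀` gives `κ u₀ r < φ r`, and `φ' = κ u`
increasing makes `φ` strictly convex, so `φ r < φ a · r / a`. As `x ↦ x / √(1 + x²)` is strictly
increasing, these compare `u'` with the slopes of the hyperbolas with `μ = 1 / (κ u₀)` and
`μ = a / φ a = a / sinh β`, and integrating over `[0, a]` gives the two bounds.
-/

open Real Set

theorem Real.tanh_strictMono : StrictMono tanh := fun x y hxy =>
  lt_of_not_ge fun h => hxy.not_ge <| by
    simpa only [artanh_tanh] using artanh_le_artanh (neg_one_lt_tanh y) (tanh_lt_one x) h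

lemma strictMono_div_sqrt_one_add_sq : StrictMono fun x : ℝ => x / √(1 + x ^ 2) := by
  simpa only [Function.comp_def, tanh_arsinh] using tanh_strictMono.comp arsinh_strictMono

lemma div_sqrt_one_add_sq_div_sqrt_one_sub_sq {t : ℝ} (ht : t ∈ Ioo (-1) 1) :
    t / √(1 - t ^ 2) / √(1 + (t / √(1 - t ^ 2)) ^ 2) = t := by
  rw [← sinh_artanh ht, ← tanh_arsinh, arsinh_sinh, tanh_artanh ht]

lemma div_div_sqrt_one_add_div_sq (r : ℝ) {μ : ℝ} (hμ : 0 < μ) :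
    r / μ / √(1 + (r / μ) ^ 2) = r / √(r ^ 2 + μ ^ 2) := by
  rw [show 1 + (r / μ) ^ 2 = (r ^ 2 + μ ^ 2) / μ ^ 2 by field_simp; ring,
    sqrt_div' _ (sq_nonneg μ), sqrt_sq hμ.le]
  field_simp

lemma hasDerivAt_sqrt_sq_add_sq {μ : ℝ} (hμ : μ ≠ 0) (r : ℝ) :
    HasDerivAt (fun x => √(x ^ 2 + μ ^ 2)) (r / √(r ^ 2 + μ ^ 2)) r := by
  have hpos : 0 < r ^ 2 + μ ^ 2 := by positivity
  convert ((hasDerivAt_pow 2 r).add_const (μ ^ 2)).sqrt hpos.ne' using 1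
  field_simp
  ring

lemma hasDerivAt_div_sqrt_one_sub_sq {v : ℝ → ℝ} {v' r : ℝ} (hv : HasDerivAt v v' r)
    (hr : |v r| < 1) :
    HasDerivAt (fun x => v x / √(1 - v x ^ 2)) (v' / √(1 - v r ^ 2) ^ 3) r := by
  have hpos : 0 < 1 - v r ^ 2 := by nlinarith [abs_lt.1 hr]
  have hs : 0 < √(1 - v r ^ 2) := sqrt_pos.2 hpos
  have hsub : HasDerivAt (fun x => 1 - v x ^ 2) (-(2 * v r * v')) r := by
    simpa using (hv.pow 2).const_sub 1
  refine (hv.div (hsub.sqrt hpos.ne') hs.ne').congr_deriv ?_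
  field_simp
  rw [sq_sqrt hpos.le]
  ring

lemma strictMonoOn_Icc_of_hasDerivAt_pos {f f' : ℝ → ℝ} {a b : ℝ}
    (hf : ∀ x ∈ Icc a b, HasDerivAt f (f' x) x) (hpos : ∀ x ∈ Ioo a b, 0 < f' x) :
    StrictMonoOn f (Icc a b) :=
  strictMonoOn_of_hasDerivWithinAt_pos (convex_Icc a b)
    (fun x hx => (hf x hx).continuousAt.continuousWithinAt)
    (fun x hx => (hf x (interior_subset hx)).hasDerivWithinAt)
    (fun x hx => hpos x (by rwa [interior_Icc] at hx))

lemma sub_lt_sub_of_hasDerivAt_lt {f g f' g' : ℝ → ℝ} {a b : ℝ} (hab : a < b)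
    (hf : ∀ x ∈ Icc a b, HasDerivAt f (f' x) x) (hg : ∀ x ∈ Icc a b, HasDerivAt g (g' x) x)
    (hlt : ∀ x ∈ Ioo a b, f' x < g' x) : f b - f a < g b - g a := by
  have := strictMonoOn_Icc_of_hasDerivAt_pos (fun x hx => (hg x hx).sub (hf x hx))
    (fun x hx => sub_pos.2 (hlt x hx)) (left_mem_Icc.2 hab.le) (right_mem_Icc.2 hab.le) hab
  simp only [Pi.sub_apply] at this
  linarith

section Hyperbola

variable {a μ : ℝ} {u φ : ℝ → ℝ}

lemma sqrt_sq_add_sq_sub_lt_sub (ha : 0 < a) (hμ : 0 < μ)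
    (hu : ∀ r ∈ Icc 0 a, HasDerivAt u (φ r / √(1 + φ r ^ 2)) r)
    (hφ : ∀ r ∈ Ioo 0 a, r / μ < φ r) :
    √(a ^ 2 + μ ^ 2) - μ < u a - u 0 := by
  have := sub_lt_sub_of_hasDerivAt_lt ha (fun r _ => hasDerivAt_sqrt_sq_add_sq hμ.ne' r) hu
    fun r hr => div_div_sqrt_one_add_div_sq r hμ ▸ strictMono_div_sqrt_one_add_sq (hφ r hr)
  simpa [sqrt_sq hμ.le] using this

lemma sub_lt_sqrt_sq_add_sq_sub (ha : 0 < a) (hμ : 0 < μ)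
    (hu : ∀ r ∈ Icc 0 a, HasDerivAt u (φ r / √(1 + φ r ^ 2)) r)
    (hφ : ∀ r ∈ Ioo 0 a, φ r < r / μ) :
    u a - u 0 < √(a ^ 2 + μ ^ 2) - μ := by
  have := sub_lt_sub_of_hasDerivAt_lt ha hu (fun r _ => hasDerivAt_sqrt_sq_add_sq hμ.ne' r)
    fun r hr => div_div_sqrt_one_add_div_sq r hμ ▸ strictMono_div_sqrt_one_add_sq (hφ r hr)
  simpa [sqrt_sq hμ.le] using this

end Hyperbola

structure IsBandProfile (κ a : ℝ) (u φ : ℝ → ℝ) : Prop where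
  hasDerivAt_height : ∀ r ∈ Icc 0 a, HasDerivAt u (φ r / √(1 + φ r ^ 2)) r
  hasDerivAt_phi : ∀ r ∈ Icc 0 a, HasDerivAt φ (κ * u r) r

namespace IsBandProfile

variable {κ a : ℝ} {u φ : ℝ → ℝ}

lemma sqrt_one_add_sq_sub_eq (h : IsBandProfile κ a u φ) :
    ∀ r ∈ Icc 0 a, √(1 + φ r ^ 2) - κ * u r ^ 2 / 2 = √(1 + φ 0 ^ 2) - κ * u 0 ^ 2 / 2 := by
  have hE : ∀ r ∈ Icc 0 a, HasDerivAt (fun x => √(1 + φ x ^ 2) - κ * u x ^ 2 / 2) 0 r := by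
    intro r hr
    have hsq : HasDerivAt (fun x => 1 + φ x ^ 2) (2 * φ r * (κ * u r)) r := by
      simpa using ((h.hasDerivAt_phi r hr).pow 2).const_add 1
    have hu2 : HasDerivAt (fun x => κ * u x ^ 2 / 2)
        (κ * (2 * u r * (φ r / √(1 + φ r ^ 2))) / 2) r := by
      simpa using (((h.hasDerivAt_height r hr).pow 2).const_mul κ).div_const 2
    refine ((hsq.sqrt (by positivity)).sub hu2).congr_deriv ?_
    field_simp
    ring
  intro r hr
  exact constant_of_has_deriv_right_zero
    (fun x hx => (hE x hx).continuousAt.continuousWithinAt)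
    (fun x hx => (hE x (Ico_subset_Icc_self hx)).hasDerivWithinAt) r hr

lemma height_pos (h : IsBandProfile κ a u φ) (hκ : 0 < κ) (hφ0 : φ 0 = 0) (hu0 : 0 < u 0) :
    ∀ r ∈ Icc 0 a, 0 < u r := by
  have hsq : ∀ r ∈ Icc 0 a, u 0 ^ 2 ≤ u r ^ 2 := by
    intro r hr
    have henergy := h.sqrt_one_add_sq_sub_eq r hr
    have hone : 1 ≤ √(1 + φ r ^ 2) := one_le_sqrt.2 (by nlinarith)
    rw [hφ0, zero_pow two_ne_zero, add_zero, sqrt_one] at henergy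
    nlinarith
  intro r hr
  by_contra! hle
  have hsub : Icc 0 r ⊆ Icc 0 a := Icc_subset_Icc_right hr.2
  obtain ⟨c, hc, hc0⟩ := intermediate_value_Icc' hr.1
    (fun x hx => (h.hasDerivAt_height x (hsub hx)).continuousAt.continuousWithinAt) ⟨hle, hu0.le⟩
  nlinarith [hsq c (hsub hc)]

lemma phi_pos (h : IsBandProfile κ a u φ) (hκ : 0 < κ) (hφ0 : φ 0 = 0) (hu0 : 0 < u 0) :
    ∀ r ∈ Ioc 0 a, 0 < φ r := by
  intro r hr
  have hmono := strictMonoOn_Icc_of_hasDerivAt_pos h.hasDerivAt_phi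
    fun x hx => mul_pos hκ (h.height_pos hκ hφ0 hu0 x (Ioo_subset_Icc_self hx))
  simpa [hφ0] using hmono (left_mem_Icc.2 (hr.1.le.trans hr.2)) (Ioc_subset_Icc_self hr) hr.1

lemma strictMonoOn_height (h : IsBandProfile κ a u φ) (hκ : 0 < κ) (hφ0 : φ 0 = 0) (hu0 : 0 < u 0) :
    StrictMonoOn u (Icc 0 a) :=
  strictMonoOn_Icc_of_hasDerivAt_pos h.hasDerivAt_height fun x hx =>
    have := h.phi_pos hκ hφ0 hu0 x (Ioo_subset_Ioc_self hx)
    by positivity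

lemma mul_lt_phi (h : IsBandProfile κ a u φ) (hκ : 0 < κ) (hφ0 : φ 0 = 0) (hu0 : 0 < u 0) :
    ∀ x ∈ Ioc 0 a, κ * u 0 * x < φ x := by
  intro x hx
  have hsub : Icc 0 x ⊆ Icc 0 a := Icc_subset_Icc_right hx.2
  have hmono := h.strictMonoOn_height hκ hφ0 hu0
  have := sub_lt_sub_of_hasDerivAt_lt hx.1
    (fun r _ => (hasDerivAt_id r).const_mul (κ * u 0)) (fun r hr => h.hasDerivAt_phi r (hsub hr))
    fun r hr => by
      have := hmono (left_mem_Icc.2 (hx.1.le.trans hx.2)) (hsub (Ioo_subset_Icc_self hr)) hr.1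
      simpa using mul_lt_mul_of_pos_left this hκ
  simpa [hφ0] using this

lemma phi_lt_div_mul (h : IsBandProfile κ a u φ) (hκ : 0 < κ) (hφ0 : φ 0 = 0) (hu0 : 0 < u 0) :
    ∀ x ∈ Ioo 0 a, φ x < φ a / a * x := by
  intro x hx
  have hconvex : StrictConvexOn ℝ (Icc 0 a) φ := by
    refine StrictMonoOn.strictConvexOn_of_deriv (convex_Icc 0 a)
      (fun x hx => (h.hasDerivAt_phi x hx).continuousAt.continuousWithinAt) ?_
    rw [interior_Icc]
    intro y hy z hz hyz
    rw [(h.hasDerivAt_phi y (Ioo_subset_Icc_self hy)).deriv,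
      (h.hasDerivAt_phi z (Ioo_subset_Icc_self hz)).deriv]
    exact mul_lt_mul_of_pos_left (h.strictMonoOn_height hκ hφ0 hu0 (Ioo_subset_Icc_self hy)
      (Ioo_subset_Icc_self hz) hyz) hκ
  have := hconvex.secant_strict_mono_aux2 (left_mem_Icc.2 (hx.1.trans hx.2).le)
    (right_mem_Icc.2 (hx.1.trans hx.2).le) hx.1 hx.2
  simp only [hφ0, sub_zero] at this
  rw [div_lt_div_iff₀ hx.1 (hx.1.trans hx.2)] at this
  rw [div_mul_eq_mul_div, lt_div_iff₀ (hx.1.trans hx.2)]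
  linarith

end IsBandProfile

theorem stmt_15_general (κ u₀ a β : ℝ) (hκ : 0 < κ) (hu₀ : 0 < u₀) (ha : 0 < a)
    (u u' u'' : ℝ → ℝ)
    (hu : ∀ r ∈ Set.Icc (0:ℝ) a, HasDerivAt u (u' r) r)
    (hu' : ∀ r ∈ Set.Icc (0:ℝ) a, HasDerivAt u' (u'' r) r)
    (hsp : ∀ r ∈ Set.Icc (0:ℝ) a, |u' r| < 1)
    (hode : ∀ r ∈ Set.Icc (0:ℝ) a,
      u'' r = κ * u r * Real.sqrt (1 - u' r ^ 2) ^ 3)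
    (hu0 : u 0 = u₀) (hu'0 : u' 0 = 0) (hu'a : u' a = Real.tanh β) :
    u₀ - 1 / (κ * u₀) + Real.sqrt (a ^ 2 + 1 / (κ ^ 2 * u₀ ^ 2)) < u a ∧
    u a < u₀ + a * (Real.cosh β - 1) / Real.sinh β := by
  subst hu0
  set φ := fun r => u' r / √(1 - u' r ^ 2)
  have hband : IsBandProfile κ a u φ := by
    constructor <;> intro r hr
    · rw [div_sqrt_one_add_sq_div_sqrt_one_sub_sq (mem_Ioo.2 (abs_lt.1 (hsp r hr)))]
      exact hu r hr
    · have hs : 0 < √(1 - u' r ^ 2) := sqrt_pos.2 (by nlinarith [abs_lt.1 (hsp r hr)])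
      refine (hasDerivAt_div_sqrt_one_sub_sq (hu' r hr) (hsp r hr)).congr_deriv ?_
      rw [hode r hr]
      field_simp
  have hφ0 : φ 0 = 0 := by simp [φ, hu'0]
  have hφa : φ a = sinh β := by
    simp only [φ, hu'a, ← sinh_artanh (mem_Ioo.2 ⟨neg_one_lt_tanh β, tanh_lt_one β⟩), artanh_tanh]
  have hsinh : 0 < sinh β := hφa ▸ hband.phi_pos hκ hφ0 hu₀ a ⟨ha, le_rfl⟩
  constructor
  · have := sqrt_sq_add_sq_sub_lt_sub (μ := 1 / (κ * u 0)) ha (by positivity)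
      hband.hasDerivAt_height fun r hr => by
        rw [show r / (1 / (κ * u 0)) = κ * u 0 * r by field_simp]
        exact hband.mul_lt_phi hκ hφ0 hu₀ r (Ioo_subset_Ioc_self hr)
    rw [div_pow, mul_pow, one_pow] at this
    linarith
  · have := sub_lt_sqrt_sq_add_sq_sub (μ := a / sinh β) ha (by positivity)
      hband.hasDerivAt_height fun r hr => by
        rw [show r / (a / sinh β) = sinh β / a * r by field_simp, ← hφa]
        exact hband.phi_lt_div_mul hκ hφ0 hu₀ r hr
    have hsqrt : √(a ^ 2 + (a / sinh β) ^ 2) = a * cosh β / sinh β := by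
      rw [← sqrt_sq (by positivity : 0 ≤ a * cosh β / sinh β)]
      congr 1
      field_simp
      linear_combination -cosh_sq β
    rw [hsqrt] at this
    rw [mul_sub, mul_one, sub_div]
    linarith

/-- Height estimates for sessile stationary bands. -/
theorem stmt_15 (κ u₀ a β : ℝ) (hκ : 0 < κ) (hu₀ : 0 < u₀) (ha : 0 < a) (hβ : 0 < β)
    (u u' u'' : ℝ → ℝ)
    (hu : ∀ r ∈ Set.Icc (0:ℝ) a, HasDerivAt u (u' r) r)
    (hu' : ∀ r ∈ Set.Icc (0:ℝ) a, HasDerivAt u' (u'' r) r)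
    (hsp : ∀ r ∈ Set.Icc (0:ℝ) a, |u' r| < 1)
    (hode : ∀ r ∈ Set.Icc (0:ℝ) a,
      u'' r = κ * u r * Real.sqrt (1 - u' r ^ 2) ^ 3)
    (hu0 : u 0 = u₀) (hu'0 : u' 0 = 0) (hu'a : u' a = Real.tanh β) :
    u₀ - 1 / (κ * u₀) + Real.sqrt (a ^ 2 + 1 / (κ ^ 2 * u₀ ^ 2)) < u a ∧
    u a < u₀ + a * (Real.cosh β - 1) / Real.sinh β :=
  stmt_15_general κ u₀ a β hκ hu₀ ha u u' u'' hu hu' hsp hode hu0 hu'0 hu'a
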